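/- Let k be a field, let (L, K, M) be a field correspondence over k with M equal to the compositum L·K (minimality), let Ω be an algebraically closed field extension of k of transcendence degree 1, and fix a k-algebra embedding PQ : M → Ω with restrictions P = PQ|_L and Q = PQ|_K. Let G_gen be the connected component of the edge PQ in the full generic graph, E_∞ ⊆ Ω the subfield generated by the images of all vertices and edges of G_gen, G_P = Gal(E_∞/P(L)), G_Q = Gal(E_∞/Q(K)), G_{PQ} = Gal(E_∞/PQ(M)) = G_P ∩ G_Q, and A^{PQ} the subgroup of Aut_k(E_∞) generated by G_P and G_Q. If G_gen is a tree (connected with no cycles), then the canonical group homomorphism from the amalgamated free product G_P *_{G_{PQ}} G_Q to A^{PQ}, induced by the inclusions of G_P and G_Q into A^{PQ}, is an isomorphism of groups. -/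

import Mathlib

/-- A field extension `F/k` has transcendence degree one iff some single element
forms a transcendence basis of `F` over `k`. -/
def HasTrdegOne (k F : Type*) [Field k] [Field F] [Algebra k F] : Prop :=
  ∃ x : F, IsTranscendenceBasis k (fun _ : Unit => x)

section GenericGraph

variable {k M : Type*} [Field k] [Field M] [Algebra k M]
  (L K : IntermediateField k M)
  {Ω : Type*} [Field Ω] [Algebra k Ω]

/-- Two edges (that is, `k`-algebra homomorphisms `M → Ω`) of the full generic graph are
incident to a common vertex. -/
def EdgeStep (e e' : M →ₐ[k] Ω) : Prop :=
  e.comp L.val = e'.comp L.val ∨ e.comp K.val = e'.comp K.val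

/-- The edge `e` lies in the connected component `G_gen` of the distinguished edge `PQ`. -/
def InGenericComponent (PQ e : M →ₐ[k] Ω) : Prop :=
  Relation.ReflTransGen (EdgeStep L K) PQ e

/-- The subfield `E_∞ = E_{G_gen}` of `Ω` generated by the images of all vertices and
edges of the connected component `G_gen` of `PQ`. -/
noncomputable def componentField (PQ : M →ₐ[k] Ω) : IntermediateField k Ω :=
  (⨆ e : {e : M →ₐ[k] Ω // InGenericComponent L K PQ e}, (e.1).fieldRange) ⊔
  (⨆ e : {e : M →ₐ[k] Ω // InGenericComponent L K PQ e}, ((e.1).comp L.val).fieldRange) ⊔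
  (⨆ e : {e : M →ₐ[k] Ω // InGenericComponent L K PQ e}, ((e.1).comp K.val).fieldRange)

/-- `G_P = Gal(E_∞ / P(L))`. -/
noncomputable def galP (PQ : M →ₐ[k] Ω) :
    Subgroup (componentField L K PQ ≃ₐ[k] componentField L K PQ) :=
  fixingSubgroup (componentField L K PQ ≃ₐ[k] componentField L K PQ)
    {z : componentField L K PQ | (z : Ω) ∈ (PQ.comp L.val).fieldRange}

/-- `G_Q = Gal(E_∞ / Q(K))`. -/
noncomputable def galQ (PQ : M →ₐ[k] Ω) :
    Subgroup (componentField L K PQ ≃ₐ[k] componentField L K PQ) :=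
  fixingSubgroup (componentField L K PQ ≃ₐ[k] componentField L K PQ)
    {z : componentField L K PQ | (z : Ω) ∈ (PQ.comp K.val).fieldRange}

/-- `G_{PQ} = Gal(E_∞ / PQ(M))`. -/
noncomputable def galPQ (PQ : M →ₐ[k] Ω) :
    Subgroup (componentField L K PQ ≃ₐ[k] componentField L K PQ) :=
  fixingSubgroup (componentField L K PQ ≃ₐ[k] componentField L K PQ)
    {z : componentField L K PQ | (z : Ω) ∈ PQ.fieldRange}

/-- `A^{PQ}`: the subgroup of `Aut_k(E_∞)` generated by `G_P` and `G_Q`. -/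
noncomputable def APQ (PQ : M →ₐ[k] Ω) :
    Subgroup (componentField L K PQ ≃ₐ[k] componentField L K PQ) :=
  galP L K PQ ⊔ galQ L K PQ

lemma galPQ_le_galP (PQ : M →ₐ[k] Ω) : galPQ L K PQ ≤ galP L K PQ := by
  intro σ hσ
  rw [galP, mem_fixingSubgroup_iff]
  rw [galPQ, mem_fixingSubgroup_iff] at hσ
  intro y hy
  apply hσ
  obtain ⟨x, hx⟩ := hy
  exact ⟨L.val x, hx⟩

lemma galPQ_le_galQ (PQ : M →ₐ[k] Ω) : galPQ L K PQ ≤ galQ L K PQ := by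
  intro σ hσ
  rw [galQ, mem_fixingSubgroup_iff]
  rw [galPQ, mem_fixingSubgroup_iff] at hσ
  intro y hy
  apply hσ
  obtain ⟨x, hx⟩ := hy
  exact ⟨K.val x, hx⟩

/-- The inclusions `G_{PQ} → G_P` and `G_{PQ} → G_Q`, as the data defining the
amalgamated free product `G_P *_{G_{PQ}} G_Q`. -/
noncomputable def amalgMaps (PQ : M →ₐ[k] Ω) :
    ∀ b : Bool, galPQ L K PQ →* ↥(cond b (galP L K PQ) (galQ L K PQ))
  | true => Subgroup.inclusion (galPQ_le_galP L K PQ)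
  | false => Subgroup.inclusion (galPQ_le_galQ L K PQ)

/-- The canonical maps `G_P → A^{PQ}` and `G_Q → A^{PQ}`. -/
noncomputable def intoAPQ (PQ : M →ₐ[k] Ω) :
    ∀ b : Bool, ↥(cond b (galP L K PQ) (galQ L K PQ)) →* APQ L K PQ
  | true => Subgroup.inclusion le_sup_left
  | false => Subgroup.inclusion le_sup_right

/-- The canonical homomorphism `G_P *_{G_{PQ}} G_Q → A^{PQ}` induced by the inclusions of
`G_P` and `G_Q` into `A^{PQ}`. -/
noncomputable def amalgamToAPQ (PQ : M →ₐ[k] Ω) :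
    Monoid.PushoutI (amalgMaps L K PQ) →* APQ L K PQ :=
  Monoid.PushoutI.lift (intoAPQ L K PQ)
    (Subgroup.inclusion (le_trans (galPQ_le_galP L K PQ) le_sup_left))
    (by intro b; cases b <;> rfl)

/-- The full generic graph, as a simple graph on the disjoint union of the blue vertices
(`k`-algebra homomorphisms `L → Ω`) and the red vertices (`k`-algebra homomorphisms
`K → Ω`); a blue and a red vertex are adjacent iff they are the two restrictions of a
common `k`-algebra homomorphism `M → Ω`. -/
def genericGraph (Ω : Type*) [Field Ω] [Algebra k Ω] :
    SimpleGraph ((↥L →ₐ[k] Ω) ⊕ (↥K →ₐ[k] Ω)) where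
  Adj v w :=
    match v, w with
    | Sum.inl p, Sum.inr q => ∃ e : M →ₐ[k] Ω, e.comp L.val = p ∧ e.comp K.val = q
    | Sum.inr q, Sum.inl p => ∃ e : M →ₐ[k] Ω, e.comp L.val = p ∧ e.comp K.val = q
    | _, _ => False
  symm := ⟨by rintro (p | q) (p' | q') h <;> simp_all⟩
  loopless := ⟨by rintro (p | q) h <;> simp_all⟩

end GenericGraph

/-!
`Aut_k(E_∞)` acts on the generic graph with values in `E_∞` by composition, and this graph embeds
into the full generic graph, so the component of the edge `PQ` is again a tree. In it, `G_P` and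
`G_Q` are the stabilizers of the endpoints `P` and `Q` of `PQ`, and by minimality (`M = L·K`) an
automorphism fixing both endpoints lies in `G_{PQ}`. Hence every letter of a nonempty reduced word
`σ₁ ⋯ σₙ` of the amalgam fixes one endpoint and moves the other, and the images of `PQ` under
`σ₁ ⋯ σᵢ` trace a non-backtracking walk, which in a tree is a path. So `σ₁ ⋯ σₙ` moves an endpoint
of `PQ` and is not in `G_{PQ}`; by the normal form theorem for amalgamated products this is
injectivity. Surjectivity holds because `A^{PQ}` is generated by `G_P` and `G_Q`.
-/

open Function MulAction

namespace Monoid.PushoutI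

variable {ι : Type*} {G : ι → Type*} {H K : Type*} [∀ i, Group (G i)] [Group H] [Group K]
  {φ : ∀ i, H →* G i}

theorem NormalWord.Transversal.eq_one_of_mem_set_of_mem_range (d : NormalWord.Transversal φ)
    {i : ι} {g : G i} (hs : g ∈ d.set i) (hr : g ∈ (φ i).range) : g = 1 := by
  have := (d.compl i).1 (a₁ := (⟨g, hr⟩, ⟨1, d.one_mem i⟩))
    (a₂ := (⟨1, (φ i).range.one_mem⟩, ⟨g, hs⟩)) (by simp)
  simpa using congrArg (fun a => (a.1 : G i)) this

theorem injective_of_forall_reduced (hφ : ∀ i, Injective (φ i)) {f : PushoutI φ →* K}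
    (hbase : Injective (f.comp (base φ)))
    (hred : ∀ w : CoprodI.Word G, Reduced φ w →
      f (ofCoprodI w.prod) ∈ (f.comp (base φ)).range → w = .empty) :
    Injective f := by
  classical
  obtain ⟨d⟩ := NormalWord.transversal_nonempty φ hφ
  rw [injective_iff_map_eq_one]
  intro x hx
  set w : NormalWord d := NormalWord.equiv x
  have hxw : x = base φ w.head * ofCoprodI w.toWord.prod :=
    (NormalWord.equiv.symm_apply_apply x).symm
  have hreduced : Reduced φ w.toWord := fun a ha hr =>
    w.ne_one a ha (d.eq_one_of_mem_set_of_mem_range (w.normalized _ _ ha) hr)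
  have hrange : f (ofCoprodI w.toWord.prod) ∈ (f.comp (base φ)).range :=
    ⟨w.head⁻¹, by rw [hxw, map_mul, mul_eq_one_iff_eq_inv] at hx; simp [hx]⟩
  have hhead : f (base φ w.head) = 1 := by
    rw [hxw, hred _ hreduced hrange] at hx; simpa using hx
  have : w.head = 1 := hbase (by simpa using hhead)
  rw [hxw, hred _ hreduced hrange, this]; simp

end Monoid.PushoutI

namespace SimpleGraph

variable {V W : Type*} {G : SimpleGraph V}

theorem IsAcyclic.eq_snd_of_adj_start_of_reachable {r : V}
    (h : (G.induce {v | G.Reachable r v}).IsAcyclic) {u v w : V} (hu : G.Reachable r u)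
    {p : G.Walk u v} (hp : p.IsPath) (hadj : G.Adj u w) (hw : w ∈ p.support) : w = p.snd := by
  classical
  have hs : ∀ y ∈ p.support, y ∈ {v | G.Reachable r v} :=
    fun y hy => hu.trans (p.takeUntil y hy).reachable
  have hmap := p.map_induce hs
  have hp' : (p.induce _ hs).IsPath := Walk.IsPath.of_map (hmap ▸ hp)
  have hsnd := h.eq_snd_of_adj_start hp' (w := ⟨w, hu.trans hadj.reachable⟩) hadj
    (by simpa using hw)
  calc w = (p.induce _ hs).snd := congrArg Subtype.val hsnd
    _ = ((p.induce _ hs).map (Embedding.induce _).toHom).snd :=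
      ((p.induce _ hs).getVert_map (Embedding.induce _).toHom 1).symm
    _ = p.snd := congrArg Walk.snd hmap

theorem IsAcyclic.induce_reachable_of_injective {G' : SimpleGraph W} (f : G →g G')
    (hf : Injective f) {r : V} (h : (G'.induce {w | G'.Reachable (f r) w}).IsAcyclic) :
    (G.induce {v | G.Reachable r v}).IsAcyclic :=
  h.comap (induceHom f fun _ hv => hv.map f) (induceHom_injective f _ hf.injOn)

variable {Γ : Type*} [Group Γ] [MulAction Γ V] {x : Bool → V}

theorem adj_apply_not_of_adj (hx : G.Adj (x true) (x false)) (b : Bool) :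
    G.Adj (x b) (x !b) := by
  cases b
  exacts [hx.symm, hx]

theorem reachable_apply_of_adj (hx : G.Adj (x true) (x false)) (b : Bool) :
    G.Reachable (x true) (x b) := by
  cases b
  exacts [hx.reachable, .rfl]

def Hom.ofSMul (hG : ∀ (g : Γ) {a b : V}, G.Adj a b → G.Adj (g • a) (g • b)) (g : Γ) :
    G →g G :=
  ⟨(g • ·), hG g⟩

theorem exists_isPath_cons_smul (hG : ∀ (g : Γ) {a b : V}, G.Adj a b → G.Adj (g • a) (g • b))
    (hx : G.Adj (x true) (x false)) (hacyc : (G.induce {v | G.Reachable (x true) v}).IsAcyclic)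
    {b : Bool} {σ : Γ} (hfix : σ • x b = x b) (hmove : σ • x (!b) ≠ x (!b)) {v : V}
    (W : G.Walk (σ • x !b) v) (hW : W.IsPath) (hb : x b ∉ W.support) :
    ∃ P : G.Walk (x b) v, P.IsPath ∧ ¬P.Nil ∧ x (!b) ∉ P.support := by
  have hadj : G.Adj (x b) (σ • x !b) := hfix ▸ hG σ (adj_apply_not_of_adj hx b)
  -- `x (!b)` is adjacent to the start `x b`, so on a path from `x b` it can only be `σ • x (!b)`.
  refine ⟨.cons hadj W, hW.cons hb, Walk.not_nil_cons, fun hmem => hmove ?_⟩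
  exact ((hacyc.eq_snd_of_adj_start_of_reachable (reachable_apply_of_adj hx b) (hW.cons hb)
    (adj_apply_not_of_adj hx b) hmem).trans (Walk.snd_cons W hadj)).symm

theorem exists_isPath_of_isChain
    (hG : ∀ (g : Γ) {a b : V}, G.Adj a b → G.Adj (g • a) (g • b))
    (hx : G.Adj (x true) (x false)) (hacyc : (G.induce {v | G.Reachable (x true) v}).IsAcyclic)
    {H : Bool → Subgroup Γ} (hH : ∀ b, H b ≤ stabilizer Γ (x b))
    (b : Bool) (σ : H b) (l : List (Σ b, H b))
    (hchain : (⟨b, σ⟩ :: l).IsChain fun a a' => a.1 ≠ a'.1)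
    (hmove : ∀ a ∈ (⟨b, σ⟩ :: l), (a.2 : Γ) • x (!a.1) ≠ x (!a.1)) :
    ∃ P : G.Walk (x b) (((⟨b, σ⟩ :: l).map fun a => (a.2 : Γ)).prod •
        x !((⟨b, σ⟩ :: l).getLast (List.cons_ne_nil _ _)).1),
      P.IsPath ∧ ¬P.Nil ∧ x (!b) ∉ P.support := by
  have hfix : (σ : Γ) • x b = x b := hH b σ.2
  induction l generalizing b σ with
  | nil =>
    rw [List.map_singleton, List.prod_singleton, List.getLast_singleton]
    refine exists_isPath_cons_smul hG hx hacyc hfix (hmove _ List.mem_cons_self) .nil .nil ?_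
    rw [Walk.support_nil, List.mem_singleton, ← hfix]
    exact fun h => (adj_apply_not_of_adj hx b).ne (MulAction.injective _ h)
  | cons a l ih =>
    obtain ⟨b', τ⟩ := a
    obtain ⟨hbb', hchain⟩ := List.isChain_cons_cons.1 hchain
    obtain rfl : b' = !b := Bool.eq_not_of_ne (Ne.symm hbb')
    obtain ⟨P, hP, -, hPb⟩ := ih (!b) τ hchain (fun a ha => hmove a (List.mem_cons_of_mem _ ha))
      (hH _ τ.2)
    have hσP : x b ∉ (P.map (Hom.ofSMul hG σ)).support := by
      rw [Walk.support_map, List.mem_map]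
      rintro ⟨y, hy, hσy⟩
      rw [Bool.not_not] at hPb
      exact hPb (MulAction.injective _ (hσy.trans hfix.symm) ▸ hy)
    rw [List.map_cons, List.prod_cons, mul_smul, List.getLast_cons_cons]
    exact exists_isPath_cons_smul hG hx hacyc hfix (hmove _ List.mem_cons_self)
      (P.map (Hom.ofSMul hG σ)) (hP.map (MulAction.injective _)) hσP

theorem prod_notMem_stabilizer_of_isChain
    (hG : ∀ (g : Γ) {a b : V}, G.Adj a b → G.Adj (g • a) (g • b))
    (hx : G.Adj (x true) (x false)) (hacyc : (G.induce {v | G.Reachable (x true) v}).IsAcyclic)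
    {H : Bool → Subgroup Γ} (hH : ∀ b, H b ≤ stabilizer Γ (x b))
    (l : List (Σ b, H b)) (hl : l ≠ []) (hchain : l.IsChain fun a a' => a.1 ≠ a'.1)
    (hmove : ∀ a ∈ l, (a.2 : Γ) • x (!a.1) ≠ x (!a.1)) :
    (l.map fun a => (a.2 : Γ)).prod ∉ stabilizer Γ (x true) ⊓ stabilizer Γ (x false) := by
  obtain ⟨⟨b, σ⟩, l, rfl⟩ := List.exists_cons_of_ne_nil hl
  set g := ((⟨b, σ⟩ :: l).map fun a => (a.2 : Γ)).prod
  set c := ((⟨b, σ⟩ :: l).getLast (List.cons_ne_nil _ _)).1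
  obtain ⟨P, hP, hPnil, hPb⟩ :
      ∃ P : G.Walk (x b) (g • x !c), P.IsPath ∧ ¬P.Nil ∧ x (!b) ∉ P.support :=
    exists_isPath_of_isChain hG hx hacyc hH b σ l hchain hmove
  have hend : g • x (!c) ≠ x (!b) := fun h => hPb (h ▸ P.end_mem_support)
  have hstart : x b ≠ g • x (!c) := (hP.nil_iff_eq.not).1 hPnil
  rintro ⟨hg₁, hg₂⟩
  have hgx : ∀ c, g • x c = x c := fun c => by cases c; exacts [hg₂, hg₁]
  rw [hgx] at hend hstart
  clear_value c
  have := hx.ne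
  cases b <;> cases c <;> simp_all

end SimpleGraph

namespace Monoid.PushoutI

theorem injective_of_acyclic_action {Γ V : Type*} [Group Γ] [MulAction Γ V]
    {G : SimpleGraph V} (hG : ∀ (g : Γ) {a b : V}, G.Adj a b → G.Adj (g • a) (g • b))
    {x : Bool → V} (hx : G.Adj (x true) (x false))
    (hacyc : (G.induce {v | G.Reachable (x true) v}).IsAcyclic)
    {H : Bool → Subgroup Γ} (hH : ∀ b, H b ≤ stabilizer Γ (x b))
    {C : Subgroup Γ} (hC : ∀ b, H b ⊓ stabilizer Γ (x !b) ≤ C)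
    {φ : ∀ b, C →* H b} (hφ : ∀ b c, (φ b c : Γ) = c)
    {f : PushoutI φ →* Γ} (hf : ∀ b h, f (of b h) = h) : Injective f := by
  have hfbase : ∀ c, f (base φ c) = c := fun c => by
    rw [← of_apply_eq_base φ true, hf, hφ]
  have hCx : ∀ b, C ≤ stabilizer Γ (x b) := fun b c hc => by
    simpa [hφ] using hH b (φ b ⟨c, hc⟩).2
  refine injective_of_forall_reduced
    (fun b c c' h => Subtype.ext (by rw [← hφ b c, ← hφ b c', h]))
    (fun c c' h => Subtype.ext (by simpa [hfbase] using h)) fun w hw hrange => ?_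
  have hprod : f (ofCoprodI w.prod) = (w.toList.map fun a => (a.2 : Γ)).prod := by
    rw [CoprodI.Word.prod, map_list_prod, map_list_prod, List.map_map, List.map_map]
    simp [comp_def, ofCoprodI_of, hf]
  by_contra hne
  refine SimpleGraph.prod_notMem_stabilizer_of_isChain hG hx hacyc hH w.toList
    (fun h => hne (CoprodI.Word.ext h)) w.chain_ne (fun a ha hfix => hw a ha ?_) ?_
  · exact ⟨⟨a.2, hC a.1 ⟨a.2.2, hfix⟩⟩, Subtype.ext (hφ _ _)⟩
  · obtain ⟨c, hc⟩ := hrange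
    rw [← hprod, ← hc, MonoidHom.comp_apply, hfbase]
    exact ⟨hCx true c.2, hCx false c.2⟩

end Monoid.PushoutI

instance AlgHom.instMulActionAlgEquiv {R A B : Type*} [CommSemiring R] [Semiring A] [Semiring B]
    [Algebra R A] [Algebra R B] : MulAction (B ≃ₐ[R] B) (A →ₐ[R] B) where
  smul σ f := (σ : B →ₐ[R] B).comp f
  one_smul _ := rfl
  mul_smul _ _ _ := rfl

theorem AlgHom.eq_of_comp_eq_of_sup_eq_top {k M B : Type*} [Field k] [Field M] [Algebra k M]
    [Semiring B] [Algebra k B] {L K : IntermediateField k M} (h : L ⊔ K = ⊤)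
    {f g : M →ₐ[k] B} (hL : f.comp L.val = g.comp L.val) (hK : f.comp K.val = g.comp K.val) :
    f = g := by
  have htop := IntermediateField.algHom_ext_of_eq_adjoin k (S := ⊤) (s := (L ∪ K : Set M))
    (φ₁ := f.comp (⊤ : IntermediateField k M).val) (φ₂ := g.comp (⊤ : IntermediateField k M).val)
    (by rw [← h]; rfl) (by
      rintro x (hx | hx)
      exacts [AlgHom.congr_fun hL ⟨x, hx⟩, AlgHom.congr_fun hK ⟨x, hx⟩])
  ext x
  exact AlgHom.congr_fun htop ⟨x, trivial⟩

theorem IntermediateField.mem_fixingSubgroup_fieldRange_iff {k Ω A : Type*} [Field k] [Field Ω]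
    [Algebra k Ω] [Field A] [Algebra k A] {E : IntermediateField k Ω} {e : A →ₐ[k] Ω}
    {e' : A →ₐ[k] E} (he : E.val.comp e' = e) (σ : E ≃ₐ[k] E) :
    σ ∈ _root_.fixingSubgroup (E ≃ₐ[k] E) {z : E | (z : Ω) ∈ e.fieldRange} ↔ σ • e' = e' := by
  rw [_root_.mem_fixingSubgroup_iff]
  constructor
  · intro h
    ext a
    exact congrArg Subtype.val (h (e' a) ⟨a, he ▸ rfl⟩)
  · rintro h z ⟨a, ha⟩
    obtain rfl : e' a = z := Subtype.ext ((AlgHom.congr_fun he a).trans ha)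
    exact AlgHom.congr_fun h a

section GenericGraph

variable {k M : Type*} [Field k] [Field M] [Algebra k M] (L K : IntermediateField k M)

def genericGraphHom {Ω₁ Ω₂ : Type*} [Field Ω₁] [Algebra k Ω₁] [Field Ω₂] [Algebra k Ω₂]
    (ψ : Ω₁ →ₐ[k] Ω₂) : genericGraph L K Ω₁ →g genericGraph L K Ω₂ where
  toFun := Sum.map ψ.comp ψ.comp
  map_rel' := by
    rintro (p | q) (p' | q') h
    · exact h.elim
    · obtain ⟨e, rfl, rfl⟩ := h
      exact ⟨ψ.comp e, AlgHom.comp_assoc _ _ _, AlgHom.comp_assoc _ _ _⟩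
    · obtain ⟨e, rfl, rfl⟩ := h
      exact ⟨ψ.comp e, AlgHom.comp_assoc _ _ _, AlgHom.comp_assoc _ _ _⟩
    · exact h.elim

theorem genericGraphHom_injective {Ω₁ Ω₂ : Type*} [Field Ω₁] [Algebra k Ω₁] [Field Ω₂]
    [Algebra k Ω₂] (ψ : Ω₁ →ₐ[k] Ω₂) : Injective (genericGraphHom L K ψ) := by
  refine Sum.map_injective.2 ⟨fun f g h => ?_, fun f g h => ?_⟩ <;>
    exact AlgHom.ext fun a => (ψ : Ω₁ →+* Ω₂).injective (AlgHom.congr_fun h a)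

theorem genericGraph_adj_smul {Ω : Type*} [Field Ω] [Algebra k Ω] (σ : Ω ≃ₐ[k] Ω)
    {v w : (L →ₐ[k] Ω) ⊕ (K →ₐ[k] Ω)} (h : (genericGraph L K Ω).Adj v w) :
    (genericGraph L K Ω).Adj (σ • v) (σ • w) :=
  (genericGraphHom L K (σ : Ω →ₐ[k] Ω)).map_adj h

end GenericGraph

section ComponentField

variable {k M Ω : Type*} [Field k] [Field M] [Algebra k M] [Field Ω] [Algebra k Ω]
  (L K : IntermediateField k M) (PQ : M →ₐ[k] Ω)

theorem fieldRange_le_componentField : PQ.fieldRange ≤ componentField L K PQ :=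
  (le_iSup (fun e : {e // InGenericComponent L K PQ e} => e.1.fieldRange)
    ⟨PQ, .refl⟩).trans (le_sup_left.trans le_sup_left)

noncomputable def baseEdge : M →ₐ[k] componentField L K PQ :=
  PQ.codRestrict (componentField L K PQ).toSubalgebra
    fun x => fieldRange_le_componentField L K PQ ⟨x, rfl⟩

theorem val_comp_baseEdge : (componentField L K PQ).val.comp (baseEdge L K PQ) = PQ := rfl

noncomputable def baseVertex (b : Bool) :
    (L →ₐ[k] componentField L K PQ) ⊕ (K →ₐ[k] componentField L K PQ) :=
  cond b (.inl ((baseEdge L K PQ).comp L.val)) (.inr ((baseEdge L K PQ).comp K.val))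

variable {L K PQ}

theorem galP_eq_stabilizer : galP L K PQ = stabilizer _ (baseVertex L K PQ true) := by
  ext σ
  rw [galP, IntermediateField.mem_fixingSubgroup_fieldRange_iff
    (e := PQ.comp L.val) (e' := (baseEdge L K PQ).comp L.val) rfl, mem_stabilizer_iff]
  exact Sum.inl_injective.eq_iff.symm

theorem galQ_eq_stabilizer : galQ L K PQ = stabilizer _ (baseVertex L K PQ false) := by
  ext σ
  rw [galQ, IntermediateField.mem_fixingSubgroup_fieldRange_iff
    (e := PQ.comp K.val) (e' := (baseEdge L K PQ).comp K.val) rfl, mem_stabilizer_iff]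
  exact Sum.inr_injective.eq_iff.symm

theorem stabilizer_inf_stabilizer_le_galPQ (hmin : L ⊔ K = ⊤) :
    stabilizer _ (baseVertex L K PQ true) ⊓
      stabilizer _ (baseVertex L K PQ false) ≤ galPQ L K PQ := by
  rintro σ ⟨hP, hQ⟩
  rw [galPQ, IntermediateField.mem_fixingSubgroup_fieldRange_iff (val_comp_baseEdge L K PQ)]
  exact AlgHom.eq_of_comp_eq_of_sup_eq_top hmin (Sum.inl_injective hP) (Sum.inr_injective hQ)

theorem isAcyclic_induce_reachable_baseVertex
    (htree : ((genericGraph L K Ω).induce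
      {w | (genericGraph L K Ω).Reachable (Sum.inl (PQ.comp L.val)) w}).IsAcyclic) :
    ((genericGraph L K (componentField L K PQ)).induce
      {w | (genericGraph L K _).Reachable (baseVertex L K PQ true) w}).IsAcyclic :=
  SimpleGraph.IsAcyclic.induce_reachable_of_injective _
    (genericGraphHom_injective L K (componentField L K PQ).val) htree

theorem coe_amalgamToAPQ_of (b : Bool) (σ : ↥(cond b (galP L K PQ) (galQ L K PQ))) :
    ((amalgamToAPQ L K PQ (Monoid.PushoutI.of b σ) : APQ L K PQ) :
      componentField L K PQ ≃ₐ[k] componentField L K PQ) = σ.1 := by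
  rw [amalgamToAPQ, Monoid.PushoutI.lift_of]
  cases b <;> rfl

theorem amalgamToAPQ_surjective : Surjective (amalgamToAPQ L K PQ) := by
  have hrange : APQ L K PQ ≤ ((APQ L K PQ).subtype.comp (amalgamToAPQ L K PQ)).range :=
    sup_le (fun σ hσ => ⟨.of true ⟨σ, hσ⟩, coe_amalgamToAPQ_of true ⟨σ, hσ⟩⟩)
      (fun σ hσ => ⟨.of false ⟨σ, hσ⟩, coe_amalgamToAPQ_of false ⟨σ, hσ⟩⟩)
  intro y
  obtain ⟨x, hx⟩ := hrange y.2
  exact ⟨x, Subtype.ext hx⟩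

end ComponentField

theorem amalgam_iso_of_tree_general
    (k M : Type*) [Field k] [Field M] [Algebra k M]
    -- the two intermediate fields `L` and `K`, with `M/L` and `M/K` finite and separable
    (L K : IntermediateField k M)
    -- minimality: `M = L·K`
    (hmin : L ⊔ K = ⊤)
    -- an algebraically closed extension `Ω` of `k` of transcendence degree 1
    (Ω : Type*) [Field Ω] [Algebra k Ω]
    -- a fixed `k`-algebra embedding `PQ : M → Ω`
    (PQ : M →ₐ[k] Ω)
    -- `G_gen` is a tree
    (htree : ((genericGraph L K Ω).induce
      {w | (genericGraph L K Ω).Reachable (Sum.inl (PQ.comp L.val)) w}).IsTree) :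
    Function.Bijective (amalgamToAPQ L K PQ) := by
  refine ⟨Injective.of_comp (f := (APQ L K PQ).subtype) ?_, amalgamToAPQ_surjective⟩
  refine Monoid.PushoutI.injective_of_acyclic_action (genericGraph_adj_smul L K)
    (x := baseVertex L K PQ) ⟨baseEdge L K PQ, rfl, rfl⟩
    (isAcyclic_induce_reachable_baseVertex htree.isAcyclic)
    (H := fun b => cond b (galP L K PQ) (galQ L K PQ)) (C := galPQ L K PQ) ?_ ?_
    (φ := amalgMaps L K PQ) (fun b _ => by cases b <;> rfl)
    (f := (APQ L K PQ).subtype.comp (amalgamToAPQ L K PQ)) coe_amalgamToAPQ_of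
  · rintro (_ | _)
    exacts [galQ_eq_stabilizer.le, galP_eq_stabilizer.le]
  · rintro (_ | _)
    · rw [galQ_eq_stabilizer, inf_comm]
      exact stabilizer_inf_stabilizer_le_galPQ hmin
    · rw [galP_eq_stabilizer]
      exact stabilizer_inf_stabilizer_le_galPQ hmin

/-- Proposition `tree_amalgamated_free_product`.
For a minimal field correspondence (`M = L·K`), if the generic graph `G_gen` (the
connected component of the edge `PQ`) is a tree, then the canonical homomorphism
`G_P *_{G_{PQ}} G_Q → A^{PQ}` is an isomorphism of groups. -/
theorem amalgam_iso_of_tree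
    (k M : Type*) [Field k] [Field M] [Algebra k M]
    -- `M` is a finitely generated field extension of `k` of transcendence degree 1
    (hfg : (⊤ : IntermediateField k M).FG)
    (htr : HasTrdegOne k M)
    -- the two intermediate fields `L` and `K`, with `M/L` and `M/K` finite and separable
    (L K : IntermediateField k M)
    [FiniteDimensional L M] [FiniteDimensional K M]
    [Algebra.IsSeparable L M] [Algebra.IsSeparable K M]
    -- minimality: `M = L·K`
    (hmin : L ⊔ K = ⊤)
    -- an algebraically closed extension `Ω` of `k` of transcendence degree 1
    (Ω : Type*) [Field Ω] [Algebra k Ω] [IsAlgClosed Ω]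
    (htrΩ : HasTrdegOne k Ω)
    -- a fixed `k`-algebra embedding `PQ : M → Ω`
    (PQ : M →ₐ[k] Ω)
    -- `G_gen` is a tree
    (htree : ((genericGraph L K Ω).induce
      {w | (genericGraph L K Ω).Reachable (Sum.inl (PQ.comp L.val)) w}).IsTree) :
    Function.Bijective (amalgamToAPQ L K PQ) :=
  amalgam_iso_of_tree_general k M L K hmin Ω PQ htree
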